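/- arXiv:1305.6118 — 3 statements merged into one kernel-verified Lean document; each statement's English description precedes it below -/
import Mathlib

section
/- Let k > 1 and m ≥ 1 be integers with gcd(k,m) = 1. Then ∑_{ξ ∈ Ξ_m} M_k(ξ) = 0, where M_k is the necklace polynomial and Ξ_m is the set of primitive m-th roots of unity in ℂ. -/
/-!
Every divisor `j` of `k` is coprime to `m`, so `ξ ↦ ξ ^ j` permutes the primitive `m`-th roots
and `∑ ξ, ξ ^ j` does not depend on `j`. The sum therefore factors as
`(∑_{j ∣ k} μ (k / j)) * ∑ ξ, ξ`, and the first factor vanishes for `k > 1`.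
-/

open Finset ArithmeticFunction
open scoped ArithmeticFunction.Moebius

theorem sum_moebius_div_divisors_eq_zero {R : Type*} [Ring R] {k : ℕ} (hk : k ≠ 1) :
    ∑ j ∈ k.divisors, (μ (k / j) : R) = 0 := by
  have h := congrArg (· k) (coe_moebius_mul_coe_zeta (R := R))
  simp only [coe_mul_zeta_apply, intCoe_apply, one_apply_ne hk] at h
  rwa [Nat.sum_div_divisors k fun d ↦ (μ d : R)]

theorem sum_primitiveRoots_pow_of_coprime {R : Type*} [CommRing R] [IsDomain R] {m j : ℕ}
    (hj : j.Coprime m) : ∑ ξ ∈ primitiveRoots m R, ξ ^ j = ∑ ξ ∈ primitiveRoots m R, ξ := by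
  rcases eq_or_ne m 0 with rfl | hm
  · simp
  have : NeZero m := ⟨hm⟩
  rw [← sum_coe_sort, ← sum_coe_sort (primitiveRoots m R)]
  exact Fintype.sum_equiv (IsPrimitiveRoot.primitiveRootsPowEquivOfCoprime hj) _ _ fun _ ↦ rfl

theorem sum_primitiveRoots_sum_divisors_mul_pow {R : Type*} [CommRing R] [IsDomain R]
    {k m : ℕ} (hkm : k.Coprime m) (c : ℕ → R) :
    ∑ ξ ∈ primitiveRoots m R, ∑ j ∈ k.divisors, c j * ξ ^ j
      = (∑ j ∈ k.divisors, c j) * ∑ ξ ∈ primitiveRoots m R, ξ := by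
  rw [sum_comm, sum_mul]
  refine sum_congr rfl fun j hj ↦ ?_
  rw [← mul_sum,
    sum_primitiveRoots_pow_of_coprime (hkm.coprime_dvd_left (Nat.dvd_of_mem_divisors hj))]

theorem stmt_8_general (k m : ℕ) (hk : 1 < k) (hkm : Nat.Coprime k m) :
    (∑ ξ ∈ primitiveRoots m ℂ,
      ((1 : ℂ) / k) * ∑ j ∈ Nat.divisors k, (ArithmeticFunction.moebius (k / j) : ℂ) * ξ ^ j)
      = 0 := by
  rw [← mul_sum, sum_primitiveRoots_sum_divisors_mul_pow hkm,
    sum_moebius_div_divisors_eq_zero hk.ne', zero_mul, mul_zero]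

theorem stmt_8 (k m : ℕ) (hk : 1 < k) (hm : 1 ≤ m) (hkm : Nat.Coprime k m) :
    (∑ ξ ∈ primitiveRoots m ℂ,
      ((1 : ℂ) / k) * ∑ j ∈ Nat.divisors k, (ArithmeticFunction.moebius (k / j) : ℂ) * ξ ^ j)
      = 0 :=
  stmt_8_general k m hk hkm
end

section
/- Let λ₁,…,λ_n be complex numbers and (ℓ_k) non-negative integers satisfying ∏_{k≥1}(1-y^k)^{-ℓ_k} = ∏_{i=1}^n (1-λ_i y)^{-1} in ℂ[[y]]. Then for every m ≥ 1, ∑_{k | m} k·ℓ_k = ∑_{i=1}^n λ_i^m. -/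
/-!
Take logarithmic derivatives `f'/f` of both sides: they turn the products into sums, and
`y · (log (1 - a yᵏ))' = k (1 - (1 - a yᵏ)⁻¹)` has coefficient `-k a^{m/k}` at `yᵐ` when
`k ∣ m`, and `0` otherwise. Series with nonzero constant terms that agree modulo `y^{m+1}`
have logarithmic derivatives agreeing modulo `yᵐ`, so comparing coefficients of `y^{m-1}`
gives `∑_{k ∣ m} k ℓ_k = ∑ λᵢᵐ`; the factors with `k > m` do not matter at this order.
-/

open Polynomial

/-- The formal power series identity `∏_{k≥1} (1-y^k)^{-ℓ_k} = ∏_{i=1}^n (1-λ_i y)^{-1}`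
in `ℂ[[y]]`, encoded equivalently as: for every `N`, the polynomials
`∏_{i=1}^n (1-λ_i y)` and `∏_{k=1}^N (1-y^k)^{ℓ_k}` agree in all coefficients of
degree `≤ N` (the omitted factors with `k > N` are `≡ 1 mod y^{N+1}`). -/
def EulerProductIdentity (n : ℕ) (lam : Fin n → ℂ) (l : ℕ → ℕ) : Prop :=
  ∀ N : ℕ, ∀ j : ℕ, j ≤ N →
    (∏ i : Fin n, (1 - C (lam i) * X)).coeff j =
      (∏ k ∈ Finset.Icc 1 N, ((1 - X ^ k) ^ (l k) : Polynomial ℂ)).coeff j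

namespace PowerSeries

section Semiring
variable {R : Type*} [CommSemiring R]

theorem X_pow_dvd_derivative {f : R⟦X⟧} {m : ℕ} (h : X ^ (m + 1) ∣ f) :
    X ^ m ∣ d⁄dX R f := by
  obtain ⟨g, rfl⟩ := h
  rw [Derivation.leibniz, Derivation.leibniz_pow, derivative_X, Nat.add_sub_cancel]
  simp only [smul_eq_mul, nsmul_eq_mul, mul_one]
  exact dvd_add ((pow_dvd_pow X m.le_succ).mul_right _) (dvd_mul_left _ _ |>.mul_left _)

end Semiring

variable {K : Type*} [Field K]

noncomputable def logDeriv (f : K⟦X⟧) : K⟦X⟧ := d⁄dX K f * f⁻¹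

theorem logDeriv_mul {f g : K⟦X⟧} (hf : constantCoeff f ≠ 0) (hg : constantCoeff g ≠ 0) :
    logDeriv (f * g) = logDeriv f + logDeriv g := by
  rw [logDeriv, logDeriv, logDeriv, Derivation.leibniz, PowerSeries.mul_inv_rev, smul_eq_mul,
    smul_eq_mul]
  linear_combination (d⁄dX K g * g⁻¹) * PowerSeries.mul_inv_cancel f hf
    + (d⁄dX K f * f⁻¹) * PowerSeries.mul_inv_cancel g hg

theorem logDeriv_prod {ι : Type*} (s : Finset ι) (f : ι → K⟦X⟧)
    (hf : ∀ i ∈ s, constantCoeff (f i) ≠ 0) :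
    logDeriv (∏ i ∈ s, f i) = ∑ i ∈ s, logDeriv (f i) := by
  induction s using Finset.cons_induction with
  | empty => simp [logDeriv]
  | cons a s ha ih =>
    rw [Finset.forall_mem_cons] at hf
    have hs : constantCoeff (∏ i ∈ s, f i) ≠ 0 := by
      rw [map_prod]
      exact Finset.prod_ne_zero_iff.mpr hf.2
    rw [Finset.prod_cons, Finset.sum_cons, logDeriv_mul hf.1 hs, ih hf.2]

theorem logDeriv_pow {f : K⟦X⟧} (hf : constantCoeff f ≠ 0) (e : ℕ) :
    logDeriv (f ^ e) = e • logDeriv f := by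
  induction e with
  | zero => simp [logDeriv]
  | succ e ih => rw [pow_succ, logDeriv_mul (by simpa using pow_ne_zero e hf) hf, ih, succ_nsmul]

theorem X_pow_dvd_logDeriv_sub {f g : K⟦X⟧} (hf : constantCoeff f ≠ 0)
    (hg : constantCoeff g ≠ 0) {m : ℕ} (h : X ^ (m + 1) ∣ f - g) :
    X ^ m ∣ logDeriv f - logDeriv g := by
  have hdiff : logDeriv f - logDeriv g
      = (d⁄dX K f * (g - f) + d⁄dX K (f - g) * f) * (f⁻¹ * g⁻¹) := by
    rw [logDeriv, logDeriv, map_sub]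
    linear_combination (d⁄dX K g * g⁻¹) * PowerSeries.mul_inv_cancel f hf
      - (d⁄dX K f * f⁻¹) * PowerSeries.mul_inv_cancel g hg
  have hgf : X ^ m ∣ g - f := by
    rw [← neg_sub, dvd_neg]
    exact (pow_dvd_pow _ m.le_succ).trans h
  rw [hdiff]
  exact (dvd_add (hgf.mul_left _) ((X_pow_dvd_derivative h).mul_right _)).mul_right _

theorem inv_one_sub_C_mul_X_pow (a : K) {k : ℕ} (hk : k ≠ 0) :
    (1 - C a * X ^ k)⁻¹ = expand k hk (rescale a (mk 1)) := by
  rw [inv_eq_iff_mul_eq_one (by simp [hk])]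
  have := congrArg (fun f => expand k hk (rescale a f)) (mk_one_mul_one_sub_eq_one (S := K))
  simpa [expand_C, expand_X, rescale_X] using this

theorem coeff_inv_one_sub_C_mul_X_pow (a : K) {k : ℕ} (hk : k ≠ 0) (n : ℕ) :
    coeff n (1 - C a * X ^ k)⁻¹ = if k ∣ n then a ^ (n / k) else 0 := by
  simp [inv_one_sub_C_mul_X_pow a hk, coeff_expand, coeff_rescale]

theorem X_mul_logDeriv_one_sub_C_mul_X_pow (a : K) {k : ℕ} (hk : k ≠ 0) :
    X * logDeriv (1 - C a * X ^ k) = C (k : K) * (1 - (1 - C a * X ^ k)⁻¹) := by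
  have hu : constantCoeff (1 - C a * X ^ k) ≠ 0 := by simp [hk]
  have hX : X * d⁄dX K (1 - C a * X ^ k) = - C (k : K) * (C a * X ^ k) := by
    obtain ⟨j, rfl⟩ := Nat.exists_eq_add_one_of_ne_zero hk
    rw [map_sub, Derivation.map_one_eq_zero, Derivation.leibniz, Derivation.leibniz_pow,
      derivative_X, derivative_C, Nat.add_sub_cancel, map_natCast]
    simp only [smul_eq_mul, nsmul_eq_mul]
    ring
  rw [logDeriv, ← mul_assoc, hX]
  linear_combination (C (k : K)) * PowerSeries.mul_inv_cancel _ hu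

theorem coeff_logDeriv_one_sub_C_mul_X_pow (a : K) {k : ℕ} (hk : k ≠ 0) (n : ℕ) :
    coeff n (logDeriv (1 - C a * X ^ k)) = -if k ∣ n + 1 then k * a ^ ((n + 1) / k) else 0 := by
  rw [← coeff_succ_X_mul, X_mul_logDeriv_one_sub_C_mul_X_pow a hk, coeff_C_mul, map_sub,
    coeff_inv_one_sub_C_mul_X_pow a hk, coeff_one, if_neg n.succ_ne_zero]
  split_ifs <;> ring

theorem coeff_logDeriv_prod_one_sub_C_mul_X {ι : Type*} (s : Finset ι) (a : ι → K) (n : ℕ) :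
    coeff n (logDeriv (∏ i ∈ s, (1 - C (a i) * X))) = -∑ i ∈ s, a i ^ (n + 1) := by
  rw [logDeriv_prod _ _ (fun i _ => by simp), map_sum, ← Finset.sum_neg_distrib]
  refine Finset.sum_congr rfl fun i _ => ?_
  simpa using coeff_logDeriv_one_sub_C_mul_X_pow (a i) one_ne_zero n

theorem coeff_logDeriv_prod_one_sub_X_pow_pow (e : ℕ → ℕ) (n : ℕ) :
    coeff n (logDeriv (∏ k ∈ Finset.Icc 1 (n + 1), (1 - X ^ k : K⟦X⟧) ^ e k))
      = -∑ k ∈ (n + 1).divisors, (k : K) * e k := by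
  have hk : ∀ k ∈ Finset.Icc 1 (n + 1), k ≠ 0 := fun k hk =>
    Nat.one_le_iff_ne_zero.mp (Finset.mem_Icc.mp hk).1
  rw [logDeriv_prod _ _ (fun k hk' => by simp [hk k hk']), map_sum, Nat.divisors,
    Finset.Ico_add_one_right_eq_Icc, Finset.sum_filter, ← Finset.sum_neg_distrib]
  refine Finset.sum_congr rfl fun k hk' => ?_
  have := coeff_logDeriv_one_sub_C_mul_X_pow (1 : K) (hk k hk') n
  rw [map_one, one_mul] at this
  rw [logDeriv_pow (by simp [hk k hk']), map_nsmul, this, nsmul_eq_mul]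
  split_ifs <;> ring

end PowerSeries

theorem Polynomial.X_pow_succ_dvd_coe_sub_coe_iff {R : Type*} [CommRing R] {p q : R[X]} {N : ℕ} :
    PowerSeries.X ^ (N + 1) ∣ (p : PowerSeries R) - (q : PowerSeries R) ↔
      ∀ j ≤ N, p.coeff j = q.coeff j := by
  simp only [PowerSeries.X_pow_dvd_iff, Nat.lt_succ_iff, map_sub, coeff_coe, sub_eq_zero]

theorem stmt_12 (n : ℕ) (lam : Fin n → ℂ) (l : ℕ → ℕ)
    (h : EulerProductIdentity n lam l) :
    ∀ m : ℕ, 1 ≤ m →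
      (∑ k ∈ Nat.divisors m, (k : ℂ) * (l k : ℂ)) = ∑ i : Fin n, lam i ^ m := by
  intro m hm
  obtain ⟨m, rfl⟩ := Nat.exists_eq_add_of_le' hm
  have hPQ : PowerSeries.X ^ (m + 1 + 1) ∣
      ∏ i, (1 - PowerSeries.C (lam i) * PowerSeries.X)
        - ∏ k ∈ Finset.Icc 1 (m + 1), (1 - PowerSeries.X ^ k : PowerSeries ℂ) ^ l k := by
    have := Polynomial.X_pow_succ_dvd_coe_sub_coe_iff.mpr (h (m + 1))
    rw [← coeToPowerSeries.ringHom_apply, ← coeToPowerSeries.ringHom_apply, map_prod,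
      map_prod] at this
    simpa using this
  have hlog := PowerSeries.X_pow_dvd_logDeriv_sub (by simp)
    (by simp +contextual [Finset.prod_ne_zero_iff, Nat.one_le_iff_ne_zero, zero_pow]) hPQ
  have hcoeff := PowerSeries.X_pow_dvd_iff.mp hlog m m.lt_succ_self
  rw [map_sub, sub_eq_zero, PowerSeries.coeff_logDeriv_prod_one_sub_C_mul_X,
    PowerSeries.coeff_logDeriv_prod_one_sub_X_pow_pow] at hcoeff
  exact (neg_inj.mp hcoeff).symm
end

section
/- Let χ(y) = ∏_{i=1}^n (1 - λ_i y) ∈ ℤ[y] be a polynomial with integer coefficients, constant term 1, and λ_i ∈ ℂ nonzero with max_i |λ_i| = 1. Then every λ_i is a root of unity. -/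
/-!
The Mahler measure is multiplicative and `1 - λX` has Mahler measure `max 1 ‖λ‖`, so the integer
polynomial `χ` has Mahler measure `1`. By Kronecker's theorem every nonzero complex root of such a
polynomial is a root of unity, and the roots of `χ` are the `λᵢ⁻¹`.
-/

open Polynomial

theorem mahlerMeasure_one_sub_C_mul_X (a : ℂ) : (1 - C a * X).mahlerMeasure = max 1 ‖a‖ := by
  rcases eq_or_ne a 0 with rfl | ha
  · simp
  rw [show (1 : ℂ[X]) - C a * X = C (-a) * X + C 1 by simp [sub_eq_neg_add],
    mahlerMeasure_C_mul_X_add_C (neg_ne_zero.mpr ha), norm_neg, norm_one, max_comm]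

theorem mahlerMeasure_prod_one_sub_C_mul_X_eq_one {ι : Type*} (s : Finset ι) (lam : ι → ℂ)
    (hle : ∀ i ∈ s, ‖lam i‖ ≤ 1) : (∏ i ∈ s, (1 - C (lam i) * X)).mahlerMeasure = 1 :=
  Finset.prod_induction _ (fun p : ℂ[X] ↦ p.mahlerMeasure = 1)
    (fun p q hp hq ↦ by rw [mahlerMeasure_mul, hp, hq, one_mul]) mahlerMeasure_one
    fun i hi ↦ by rw [mahlerMeasure_one_sub_C_mul_X, max_eq_left (hle i hi)]

theorem inv_mem_roots_prod_one_sub_C_mul_X {ι : Type*} {s : Finset ι} {lam : ι → ℂ} {i : ι}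
    (hi : i ∈ s) (hne : lam i ≠ 0) : (lam i)⁻¹ ∈ (∏ j ∈ s, (1 - C (lam j) * X)).roots := by
  have hprod : ∏ j ∈ s, (1 - C (lam j) * X) ≠ 0 :=
    Finset.prod_ne_zero_iff.mpr fun j _ h ↦ by simpa using congrArg (eval 0) h
  rw [mem_roots hprod, IsRoot, eval_prod]
  exact Finset.prod_eq_zero hi (by simp [hne])

theorem stmt_14_general (n : ℕ) (lam : Fin n → ℂ) (hne : ∀ i, lam i ≠ 0)
    (hint : ∃ p : Polynomial ℤ, p.map (Int.castRingHom ℂ) = ∏ i : Fin n, (1 - C (lam i) * X))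
    (hle : ∀ i, ‖lam i‖ ≤ 1) :
    ∀ i, ∃ m : ℕ, 0 < m ∧ lam i ^ m = 1 := by
  obtain ⟨p, hp⟩ := hint
  intro i
  have hmahler : (p.map (Int.castRingHom ℂ)).mahlerMeasure = 1 := by
    rw [hp]
    exact mahlerMeasure_prod_one_sub_C_mul_X_eq_one _ lam fun j _ ↦ hle j
  have hroot : (lam i)⁻¹ ∈ p.aroots ℂ := by
    rw [aroots_def, algebraMap_int_eq, hp]
    exact inv_mem_roots_prod_one_sub_C_mul_X (Finset.mem_univ i) (hne i)
  obtain ⟨m, hm, hpow⟩ := pow_eq_one_of_mahlerMeasure_eq_one hmahler (inv_ne_zero (hne i)) hroot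
  exact ⟨m, hm, by rwa [inv_pow, inv_eq_one] at hpow⟩

theorem stmt_14 (n : ℕ) (lam : Fin n → ℂ) (hne : ∀ i, lam i ≠ 0)
    (hint : ∃ p : Polynomial ℤ, p.map (Int.castRingHom ℂ) = ∏ i : Fin n, (1 - C (lam i) * X))
    (hle : ∀ i, ‖lam i‖ ≤ 1) (hmax : ∃ i, ‖lam i‖ = 1) :
    ∀ i, ∃ m : ℕ, 0 < m ∧ lam i ^ m = 1 :=
  stmt_14_general n lam hne hint hle
end
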